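/- Let u, ũ ∈ ℂ^L with ‖u‖₂ = ‖ũ‖₂ = 1, and let u_p, ũ_p be their entrywise phase vectors, u_p[k] = u[k]/|u[k]|, ũ_p[k] = ũ[k]/|ũ[k]|. Set δ = min_k |u[k]| and assume δ > 0 and ‖ũ − u‖₂ ≤ δ/2. Then ‖ũ_p − u_p‖₂ ≤ 3‖ũ − u‖₂/δ². -/

import Mathlib

/-!
Per entry, `a/|a| - b/|b| = (a - b)/|b| + a (|a|⁻¹ - |b|⁻¹)` and both terms have norm at most
`|a - b|/|b|`, so the phase map is `2/δ`-Lipschitz on entries of modulus at least `δ`. Summing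
gives `‖ũ_p - u_p‖ ≤ 2‖ũ - u‖/δ`, and `2/δ ≤ 3/δ²` because `δ ≤ ‖u‖ = 1`.
-/

open Finset

lemma mul_abs_inv_sub_inv_le {x y : ℝ} (hx : 0 ≤ x) (hy : 0 < y) :
    x * |x⁻¹ - y⁻¹| ≤ |x - y| / y := by
  rcases hx.eq_or_lt with rfl | hx
  · simp only [zero_mul]; positivity
  · rw [inv_sub_inv hx.ne' hy.ne', abs_div, abs_of_pos (mul_pos hx hy), mul_div_assoc',
      mul_div_mul_left _ _ hx.ne', abs_sub_comm]

lemma RCLike.norm_div_norm_sub_div_norm_le {𝕜 : Type*} [RCLike 𝕜] (a b : 𝕜) (hb : b ≠ 0) :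
    ‖a / (‖a‖ : 𝕜) - b / (‖b‖ : 𝕜)‖ ≤ 2 * ‖a - b‖ / ‖b‖ := by
  have hb' : 0 < ‖b‖ := norm_pos_iff.mpr hb
  have hsplit : a / (‖a‖ : 𝕜) - b / (‖b‖ : 𝕜)
      = (a - b) / (‖b‖ : 𝕜) + a * (((‖a‖⁻¹ - ‖b‖⁻¹ : ℝ)) : 𝕜) := by
    push_cast
    ring
  have hrescale : ‖a * (((‖a‖⁻¹ - ‖b‖⁻¹ : ℝ)) : 𝕜)‖ ≤ ‖a - b‖ / ‖b‖ := by
    rw [norm_mul, RCLike.norm_ofReal]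
    exact (mul_abs_inv_sub_inv_le (norm_nonneg a) hb').trans
      (div_le_div_of_nonneg_right (abs_norm_sub_norm_le a b) hb'.le)
  calc ‖a / (‖a‖ : 𝕜) - b / (‖b‖ : 𝕜)‖
      ≤ ‖(a - b) / (‖b‖ : 𝕜)‖ + ‖a * (((‖a‖⁻¹ - ‖b‖⁻¹ : ℝ)) : 𝕜)‖ := by
        rw [hsplit]; exact norm_add_le _ _
    _ ≤ ‖a - b‖ / ‖b‖ + ‖a - b‖ / ‖b‖ := by
        rw [norm_div, RCLike.norm_ofReal, abs_norm]; gcongr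
    _ = 2 * ‖a - b‖ / ‖b‖ := by ring

lemma norm_le_sqrt_sum_norm_sq {ι E : Type*} [Fintype ι] [SeminormedAddCommGroup E]
    (f : ι → E) (k : ι) : ‖f k‖ ≤ √(∑ i, ‖f i‖ ^ 2) :=
  Real.le_sqrt_of_sq_le <|
    single_le_sum (f := fun i => ‖f i‖ ^ 2) (fun _ _ => sq_nonneg _) (mem_univ k)

lemma sqrt_sum_sq_le_mul_sqrt_sum_sq {ι : Type*} [Fintype ι] {f g : ι → ℝ} {c : ℝ}
    (hc : 0 ≤ c) (hf : ∀ i, 0 ≤ f i) (hfg : ∀ i, f i ≤ c * g i) :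
    √(∑ i, f i ^ 2) ≤ c * √(∑ i, g i ^ 2) := by
  rw [← Real.sqrt_sq hc, ← Real.sqrt_mul (sq_nonneg c), mul_sum]
  gcongr
  rw [← mul_pow]
  exact pow_le_pow_left₀ (hf i) (hfg i) 2

theorem stmt3_general (L : ℕ) (u v : Fin L → ℂ) (δ : ℝ)
    (hu : Real.sqrt (∑ k, ‖u k‖ ^ 2) = 1)
    (hδ : IsLeast (Set.range fun k => ‖u k‖) δ)
    (hδpos : 0 < δ) :
    Real.sqrt (∑ k, ‖v k / (‖v k‖ : ℂ) - u k / (‖u k‖ : ℂ)‖ ^ 2) ≤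
      3 * Real.sqrt (∑ k, ‖v k - u k‖ ^ 2) / δ ^ 2 := by
  obtain ⟨⟨k₀, hk₀⟩, hlb⟩ := hδ
  have hδu : ∀ k, δ ≤ ‖u k‖ := fun k => hlb ⟨k, rfl⟩
  have hδ1 : δ ≤ 1 := hk₀ ▸ hu ▸ norm_le_sqrt_sum_norm_sq u k₀
  have hphase : ∀ k, ‖v k / (‖v k‖ : ℂ) - u k / (‖u k‖ : ℂ)‖ ≤ 2 / δ * ‖v k - u k‖ := by
    intro k
    have huk : u k ≠ 0 := norm_pos_iff.mp (hδpos.trans_le (hδu k))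
    calc _ ≤ 2 * ‖v k - u k‖ / ‖u k‖ := RCLike.norm_div_norm_sub_div_norm_le (v k) (u k) huk
      _ ≤ 2 * ‖v k - u k‖ / δ := by gcongr; exact hδu k
      _ = 2 / δ * ‖v k - u k‖ := by ring
  set S := √(∑ k, ‖v k - u k‖ ^ 2)
  have hS : 0 ≤ S := Real.sqrt_nonneg _
  calc _ ≤ 2 / δ * S :=
        sqrt_sum_sq_le_mul_sqrt_sum_sq (by positivity) (fun _ => norm_nonneg _) hphase
    _ ≤ 3 * S / δ ^ 2 := by
        rw [div_mul_eq_mul_div, div_le_div_iff₀ hδpos (by positivity)]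
        nlinarith [mul_nonneg hS hδpos.le, mul_nonneg (mul_nonneg hS hδpos.le) (sub_nonneg.mpr hδ1)]

theorem stmt3 (L : ℕ) (u v : Fin L → ℂ) (δ : ℝ)
    (hu : Real.sqrt (∑ k, ‖u k‖ ^ 2) = 1)
    (hv : Real.sqrt (∑ k, ‖v k‖ ^ 2) = 1)
    (hδ : IsLeast (Set.range fun k => ‖u k‖) δ)
    (hδpos : 0 < δ)
    (hclose : Real.sqrt (∑ k, ‖v k - u k‖ ^ 2) ≤ δ / 2) :
    Real.sqrt (∑ k, ‖v k / (‖v k‖ : ℂ) - u k / (‖u k‖ : ℂ)‖ ^ 2) ≤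
      3 * Real.sqrt (∑ k, ‖v k - u k‖ ^ 2) / δ ^ 2 :=
  stmt3_general L u v δ hu hδ hδpos
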